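/- Let H be a Hopf algebra, A a left H-module algebra, and A′ the commutant of A in the smash product A ⋊ H. There is a linear isomorphism Hom_k(H, A′) ≅ End_{A-A}(A ⋊ H), sending ψ : H → A′ to the unique A-bimodule endomorphism of A ⋊ H mapping a ⋊ h to (a ⋊ h₁)ψ(h₂). -/

import Mathlib

open TensorProduct LinearMap

noncomputable section

variable (k : Type*) [Field k]

/-- Convolution product of two linear maps from a coalgebra `H` to an algebra `B`. -/
def conv {H B : Type*} [AddCommMonoid H] [Module k H] [CoalgebraStruct k H]
    [Ring B] [Algebra k B] (f g : H →ₗ[k] B) : H →ₗ[k] B :=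
  LinearMap.mul' k B ∘ₗ TensorProduct.map f g ∘ₗ CoalgebraStruct.comul

variable (H A : Type*) [Ring H] [HopfAlgebra k H] [Ring A] [Algebra k A]

/-- The uncurried version of an action map. -/
def actU (act : H →ₗ[k] A →ₗ[k] A) : H ⊗[k] A →ₗ[k] A := TensorProduct.lift act

/-- `A` is a left `H`-module algebra via `act`. The measuring condition
`h • (a b) = (h₁ • a)(h₂ • b)` is expressed at the level of linear maps. -/
structure IsModAlg (act : H →ₗ[k] A →ₗ[k] A) : Prop where
  act_one : act 1 = LinearMap.id
  act_mul : ∀ h g : H, act (h * g) = act h ∘ₗ act g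
  smul_mul :
    actU k H A act ∘ₗ lTensor H (LinearMap.mul' k A)
      = LinearMap.mul' k A
          ∘ₗ TensorProduct.map (actU k H A act) (actU k H A act)
          ∘ₗ (TensorProduct.tensorTensorTensorComm k H H A A).toLinearMap
          ∘ₗ rTensor (A ⊗[k] A) (Coalgebra.comul (R := k))
  smul_one : ∀ h : H, act h 1 = Coalgebra.counit (R := k) h • (1 : A)

variable (B : Type*) [Ring B] [Algebra k B]

/-- `B` is the smash product `A ⋊ H`, with `ιA a = a ⋊ 1`, `ιH h = 1 ⋊ h`,
`e (a ⊗ h) = a ⋊ h`, and the straightening rule `(1 ⋊ h)(a ⋊ 1) = (h₁ • a) ⋊ h₂`. -/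
structure IsSmash (act : H →ₗ[k] A →ₗ[k] A) (ιA : A →ₐ[k] B) (ιH : H →ₐ[k] B)
    (e : A ⊗[k] H ≃ₗ[k] B) : Prop where
  isModAlg : IsModAlg k H A act
  e_tmul : ∀ (a : A) (h : H), e (a ⊗ₜ[k] h) = ιA a * ιH h
  straighten :
    LinearMap.mul' k B ∘ₗ TensorProduct.map ιH.toLinearMap ιA.toLinearMap
      = LinearMap.mul' k B
          ∘ₗ TensorProduct.map (ιA.toLinearMap ∘ₗ actU k H A act) ιH.toLinearMap
          ∘ₗ (TensorProduct.assoc k H A H).symm.toLinearMap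
          ∘ₗ lTensor H (TensorProduct.comm k H A).toLinearMap
          ∘ₗ (TensorProduct.assoc k H H A).toLinearMap
          ∘ₗ rTensor A (Coalgebra.comul (R := k))

/-- The endomorphism `a ⋊ h ↦ (a ⋊ h₁) ψ(h₂)` of the smash product `B`. -/
def inducedEnd (ιA : A →ₐ[k] B) (ιH : H →ₐ[k] B) (e : A ⊗[k] H ≃ₗ[k] B)
    (ψ : H →ₗ[k] B) : B →ₗ[k] B :=
  LinearMap.mul' k B
    ∘ₗ TensorProduct.map
        (LinearMap.mul' k B ∘ₗ TensorProduct.map ιA.toLinearMap ιH.toLinearMap) ψ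
    ∘ₗ (TensorProduct.assoc k A H H).symm.toLinearMap
    ∘ₗ lTensor A (Coalgebra.comul (R := k))
    ∘ₗ e.symm.toLinearMap

/-- The space of `A`-bimodule endomorphisms of `B`, where `A` acts through `ιA`. -/
def bimodEnd (ιA : A →ₐ[k] B) : Submodule k (B →ₗ[k] B) where
  carrier := {f | ∀ (a : A) (x : B), f (ιA a * x) = ιA a * f x ∧ f (x * ιA a) = f x * ιA a}
  add_mem' := by
    intro f g hf hg a x
    refine ⟨?_, ?_⟩ <;>
      simp [LinearMap.add_apply, (hf a x).1, (hg a x).1, (hf a x).2, (hg a x).2,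
        mul_add, add_mul]
  zero_mem' := by intro a x; simp
  smul_mem' := by
    intro c f hf a x
    refine ⟨?_, ?_⟩ <;>
      simp [LinearMap.smul_apply, (hf a x).1, (hf a x).2, mul_smul_comm, smul_mul_assoc]


section Aux

open Coalgebra HopfAlgebra

variable {k H A B}

/-- Elementwise formula for the convolution product. -/
lemma conv_repr (f g : H →ₗ[k] B) {x : H} {ι : Type*} (r : Coalgebra.Repr k x ι) :
    conv k f g x = ∑ i ∈ r.index, f (r.left i) * g (r.right i) := by
  simp only [conv, LinearMap.comp_apply, ← r.eq, map_sum, TensorProduct.map_tmul,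
    LinearMap.mul'_apply]

lemma conv_def' (f g : H →ₗ[k] B) (x : H) :
    conv k f g x = ∑ i ∈ (ℛ k x).index, f ((ℛ k x).left i) * g ((ℛ k x).right i) :=
  conv_repr f g (ℛ k x)

lemma conv_assoc (f g h : H →ₗ[k] B) :
    conv k (conv k f g) h = conv k f (conv k g h) := by
  ext x
  have key := congrArg
      (LinearMap.mul' k B ∘ₗ TensorProduct.map f (LinearMap.mul' k B ∘ₗ TensorProduct.map g h))
      (Coalgebra.sum_tmul_tmul_eq (ℛ k x) (fun i => ℛ k ((ℛ k x).left i))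
        (fun i => ℛ k ((ℛ k x).right i)))
  simp only [map_sum, LinearMap.comp_apply, TensorProduct.map_tmul,
    LinearMap.mul'_apply] at key
  simp only [LinearMap.comp_apply, conv_def', Finset.sum_mul, Finset.mul_sum, mul_assoc]
  exact key

lemma conv_one_left (f : H →ₗ[k] B) :
    conv k ((Algebra.linearMap k B) ∘ₗ (Coalgebra.counit (R := k) (A := H))) f = f := by
  ext x
  have key := congrArg (TensorProduct.lid k B)
      (Coalgebra.sum_counit_tmul_map_eq (repr := ℛ k x) f x)
  simp only [map_sum, TensorProduct.lid_tmul] at key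
  rw [conv_repr _ _ (ℛ k x)]
  simpa [Algebra.smul_def] using key

lemma conv_mulRight (c : B) (f g : H →ₗ[k] B) :
    LinearMap.mulRight k c ∘ₗ conv k f g = conv k f (LinearMap.mulRight k c ∘ₗ g) := by
  ext x
  simp [conv_def', Finset.sum_mul, mul_assoc]

lemma conv_mid (c : B) (f g : H →ₗ[k] B) :
    conv k (LinearMap.mulRight k c ∘ₗ f) g = conv k f (LinearMap.mulLeft k c ∘ₗ g) := by
  ext x
  simp [conv_def', mul_assoc]

variable (ιH : H →ₐ[k] B)

lemma conv_anti_left :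
    conv k (ιH.toLinearMap ∘ₗ antipode (R := k)) ιH.toLinearMap
      = (Algebra.linearMap k B) ∘ₗ (Coalgebra.counit (R := k) (A := H)) := by
  ext x
  rw [conv_repr _ _ (ℛ k x)]
  simp only [LinearMap.comp_apply, AlgHom.toLinearMap_apply, ← map_mul, ← map_sum,
    HopfAlgebra.sum_antipode_mul_eq_algebraMap_counit (ℛ k x)]
  simp [Algebra.linearMap_apply]

lemma conv_anti_right :
    conv k ιH.toLinearMap (ιH.toLinearMap ∘ₗ antipode (R := k))
      = (Algebra.linearMap k B) ∘ₗ (Coalgebra.counit (R := k) (A := H)) := by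
  ext x
  rw [conv_repr _ _ (ℛ k x)]
  simp only [LinearMap.comp_apply, AlgHom.toLinearMap_apply, ← map_mul, ← map_sum,
    HopfAlgebra.sum_mul_antipode_eq_algebraMap_counit (ℛ k x)]
  simp [Algebra.linearMap_apply]

lemma conv_cancel {p q : H →ₗ[k] B}
    (hpq : conv k ιH.toLinearMap p = conv k ιH.toLinearMap q) : p = q := by
  have h1 : ∀ t : H →ₗ[k] B,
      conv k (ιH.toLinearMap ∘ₗ antipode (R := k)) (conv k ιH.toLinearMap t) = t := fun t => by
    rw [← conv_assoc, conv_anti_left, conv_one_left]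
  rw [← h1 p, hpq, h1 q]

end Aux

section Aux2

open Coalgebra

variable {k H A B}
variable {act : H →ₗ[k] A →ₗ[k] A} {ιA : A →ₐ[k] B} {ιH : H →ₐ[k] B}
variable {e : A ⊗[k] H ≃ₗ[k] B}

lemma straighten_repr (hs : IsSmash k H A B act ιA ιH e) (h : H) (a : A)
    {ι : Type*} (r : Coalgebra.Repr k h ι) :
    ιH h * ιA a = ∑ i ∈ r.index, ιA (act (r.left i) a) * ιH (r.right i) := by
  have key := LinearMap.congr_fun hs.straighten (h ⊗ₜ[k] a)
  simp only [LinearMap.comp_apply, TensorProduct.map_tmul, LinearMap.mul'_apply,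
    AlgHom.toLinearMap_apply, LinearMap.rTensor_tmul] at key
  rw [← r.eq] at key
  simpa [TensorProduct.sum_tmul, map_sum, actU] using key

lemma beta_apply (hs : IsSmash k H A B act ιA ιH e) (a : A) (h : H) :
    ιH h * ιA a = conv k (ιA.toLinearMap ∘ₗ act.flip a) ιH.toLinearMap h := by
  rw [straighten_repr hs h a (ℛ k h), conv_repr _ _ (ℛ k h)]
  simp

lemma beta_map (hs : IsSmash k H A B act ιA ιH e) (a : A) :
    LinearMap.mulRight k (ιA a) ∘ₗ ιH.toLinearMap
      = conv k (ιA.toLinearMap ∘ₗ act.flip a) ιH.toLinearMap := by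
  ext h
  simpa using beta_apply hs a h

set_option synthInstance.maxHeartbeats 1000000 in
lemma inducedEnd_e_tmul (ψ : H →ₗ[k] B) (a : A) (h : H) {ι : Type*} (r : Coalgebra.Repr k h ι) :
    inducedEnd k H A B ιA ιH e ψ (e (a ⊗ₜ[k] h))
      = ∑ i ∈ r.index, ιA a * ιH (r.left i) * ψ (r.right i) := by
  simp only [inducedEnd, LinearMap.comp_apply, LinearEquiv.coe_coe,
    LinearEquiv.symm_apply_apply, LinearMap.lTensor_tmul]
  rw [← r.eq]
  simp [TensorProduct.tmul_sum, map_sum, TensorProduct.assoc_symm_tmul]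

lemma phi_e (hs : IsSmash k H A B act ιA ιH e) (ψ : H →ₗ[k] B) (a : A) (h : H) :
    inducedEnd k H A B ιA ιH e ψ (e (a ⊗ₜ[k] h))
      = ιA a * conv k ιH.toLinearMap ψ h := by
  rw [inducedEnd_e_tmul ψ a h (ℛ k h), conv_repr _ _ (ℛ k h)]
  simp [Finset.mul_sum, mul_assoc]

lemma phi_iotaH (hs : IsSmash k H A B act ιA ιH e) (ψ : H →ₗ[k] B) (h : H) :
    inducedEnd k H A B ιA ιH e ψ (ιH h) = conv k ιH.toLinearMap ψ h := by
  have h1 : ιH h = e (1 ⊗ₜ[k] h) := by rw [hs.e_tmul]; simp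
  rw [h1, phi_e hs]
  simp

lemma phi_conv (hs : IsSmash k H A B act ιA ιH e) (ψ : H →ₗ[k] B) (χ : H →ₗ[k] A) (h : H) :
    inducedEnd k H A B ιA ιH e ψ (conv k (ιA.toLinearMap ∘ₗ χ) ιH.toLinearMap h)
      = conv k (ιA.toLinearMap ∘ₗ χ) (conv k ιH.toLinearMap ψ) h := by
  rw [conv_repr _ _ (ℛ k h), conv_repr _ _ (ℛ k h), map_sum]
  refine Finset.sum_congr rfl fun i _ => ?_
  simp only [LinearMap.comp_apply, AlgHom.toLinearMap_apply]
  rw [← hs.e_tmul, phi_e hs]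

lemma phi_left (hs : IsSmash k H A B act ιA ιH e) (ψ : H →ₗ[k] B) (a : A) (x : B) :
    inducedEnd k H A B ιA ιH e ψ (ιA a * x) = ιA a * inducedEnd k H A B ιA ιH e ψ x := by
  obtain ⟨t, rfl⟩ := e.surjective x
  induction t with
  | zero => simp
  | tmul b h =>
      have h1 : ιA a * e (b ⊗ₜ[k] h) = e ((a * b) ⊗ₜ[k] h) := by
        rw [hs.e_tmul, hs.e_tmul, map_mul, mul_assoc]
      rw [h1, phi_e hs, phi_e hs, map_mul, mul_assoc]
  | add u v hu hv => simp only [map_add, mul_add] at hu hv ⊢; rw [hu, hv]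

lemma phi_right (hs : IsSmash k H A B act ιA ιH e) (ψ : H →ₗ[k] B)
    (hψ : ∀ h a, ιA a * ψ h = ψ h * ιA a) (a : A) (x : B) :
    inducedEnd k H A B ιA ιH e ψ (x * ιA a) = inducedEnd k H A B ιA ιH e ψ x * ιA a := by
  obtain ⟨t, rfl⟩ := e.surjective x
  induction t with
  | zero => simp
  | tmul b g =>
      have h1 : e (b ⊗ₜ[k] g) * ιA a
          = ιA b * conv k (ιA.toLinearMap ∘ₗ act.flip a) ιH.toLinearMap g := by
        rw [hs.e_tmul, mul_assoc, beta_apply hs]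
      have h2 : conv k ιH.toLinearMap ψ g * ιA a
          = conv k (conv k (ιA.toLinearMap ∘ₗ act.flip a) ιH.toLinearMap) ψ g := by
        have e1 : LinearMap.mulRight k (ιA a) ∘ₗ ψ = LinearMap.mulLeft k (ιA a) ∘ₗ ψ := by
          ext h; simp [hψ h a]
        have := LinearMap.congr_fun (conv_mulRight (ιA a) ιH.toLinearMap ψ) g
        simp only [LinearMap.comp_apply, LinearMap.mulRight_apply] at this
        rw [this, e1, ← conv_mid, beta_map hs]
      rw [h1, phi_left hs, phi_conv hs, ← conv_assoc, phi_e hs, mul_assoc, h2]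
  | add u v hu hv => simp only [map_add, add_mul] at hu hv ⊢; rw [hu, hv]

lemma mem_centralizer_of_bimod (hs : IsSmash k H A B act ιA ιH e) (χ : H →ₗ[k] B)
    (hbm : ∀ (a : A) (x : B),
      inducedEnd k H A B ιA ιH e χ (ιA a * x) = ιA a * inducedEnd k H A B ιA ιH e χ x ∧
      inducedEnd k H A B ιA ιH e χ (x * ιA a)
        = inducedEnd k H A B ιA ιH e χ x * ιA a) :
    ∀ (h : H) (a : A), ιA a * χ h = χ h * ιA a := by
  intro h a
  have key : conv k ιH.toLinearMap (LinearMap.mulLeft k (ιA a) ∘ₗ χ)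
      = conv k ιH.toLinearMap (LinearMap.mulRight k (ιA a) ∘ₗ χ) := by
    ext h'
    have h2 := (hbm a (ιH h')).2
    rw [phi_iotaH hs] at h2
    rw [beta_apply hs, phi_conv hs, ← conv_assoc, ← beta_map hs, conv_mid] at h2
    have h3 := LinearMap.congr_fun (conv_mulRight (ιA a) ιH.toLinearMap χ) h'
    simp only [LinearMap.comp_apply, LinearMap.mulRight_apply] at h3
    rw [h2, ← h3]
  have := LinearMap.congr_fun (conv_cancel ιH key) h
  simpa using this

lemma claim4 (hs : IsSmash k H A B act ιA ιH e) (f : B →ₗ[k] B)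
    (hf : ∀ (a : A) (x : B), f (ιA a * x) = ιA a * f x) :
    inducedEnd k H A B ιA ιH e
        (conv k (ιH.toLinearMap ∘ₗ HopfAlgebra.antipode (R := k)) (f ∘ₗ ιH.toLinearMap)) = f := by
  apply LinearMap.ext
  intro x
  obtain ⟨t, rfl⟩ := e.surjective x
  induction t with
  | zero => simp
  | tmul a h =>
      rw [phi_e hs, ← conv_assoc, conv_anti_right, conv_one_left]
      simp only [LinearMap.comp_apply, AlgHom.toLinearMap_apply]
      rw [← hf, ← hs.e_tmul]
  | add u v hu hv => simp only [map_add] at hu hv ⊢; rw [hu, hv]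

lemma claim3 (hs : IsSmash k H A B act ιA ιH e) (ψ : H →ₗ[k] B) :
    conv k (ιH.toLinearMap ∘ₗ HopfAlgebra.antipode (R := k))
        ((inducedEnd k H A B ιA ιH e ψ) ∘ₗ ιH.toLinearMap) = ψ := by
  have h1 : (inducedEnd k H A B ιA ιH e ψ) ∘ₗ ιH.toLinearMap = conv k ιH.toLinearMap ψ := by
    ext h; exact phi_iotaH hs ψ h
  rw [h1, ← conv_assoc, conv_anti_left, conv_one_left]

lemma inducedEnd_add (ψ φ : H →ₗ[k] B) (ιA' : A →ₐ[k] B) (ιH' : H →ₐ[k] B)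
    (e' : A ⊗[k] H ≃ₗ[k] B) :
    inducedEnd k H A B ιA' ιH' e' (ψ + φ)
      = inducedEnd k H A B ιA' ιH' e' ψ + inducedEnd k H A B ιA' ιH' e' φ := by
  simp only [inducedEnd, TensorProduct.map_add_right, LinearMap.add_comp, LinearMap.comp_add]

lemma inducedEnd_smul (c : k) (ψ : H →ₗ[k] B) (ιA' : A →ₐ[k] B) (ιH' : H →ₐ[k] B)
    (e' : A ⊗[k] H ≃ₗ[k] B) :
    inducedEnd k H A B ιA' ιH' e' (c • ψ) = c • inducedEnd k H A B ιA' ιH' e' ψ := by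
  simp only [inducedEnd, TensorProduct.map_smul_right, LinearMap.smul_comp, LinearMap.comp_smul]

end Aux2

section Aux3

variable {k H B}

lemma conv_add_right {H' : Type*} [AddCommMonoid H'] [Module k H'] [CoalgebraStruct k H']
    (f g₁ g₂ : H' →ₗ[k] B) : conv k f (g₁ + g₂) = conv k f g₁ + conv k f g₂ := by
  simp only [conv, TensorProduct.map_add_right, LinearMap.add_comp, LinearMap.comp_add]

lemma conv_smul_right {H' : Type*} [AddCommMonoid H'] [Module k H'] [CoalgebraStruct k H']
    (c : k) (f g : H' →ₗ[k] B) : conv k f (c • g) = c • conv k f g := by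
  simp only [conv, TensorProduct.map_smul_right, LinearMap.smul_comp, LinearMap.comp_smul]

end Aux3

/-- `Hom_k(H, A′) ≅ End_{A-A}(A ⋊ H)` linearly, where `ψ` corresponds to
the `A`-bimodule endomorphism `a ⋊ h ↦ (a ⋊ h₁)ψ(h₂)`. -/
theorem stmt3 (act : H →ₗ[k] A →ₗ[k] A) (ιA : A →ₐ[k] B) (ιH : H →ₐ[k] B)
    (e : A ⊗[k] H ≃ₗ[k] B) (hs : IsSmash k H A B act ιA ιH e) :
    ∃ F : (H →ₗ[k] (Subalgebra.centralizer k (Set.range ⇑ιA) : Subalgebra k B))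
            ≃ₗ[k] (bimodEnd k A B ιA),
      ∀ ψ, ((F ψ : (bimodEnd k A B ιA)) : B →ₗ[k] B)
        = inducedEnd k H A B ιA ιH e
            ((Subalgebra.centralizer k (Set.range ⇑ιA)).val.toLinearMap ∘ₗ ψ) := by
  classical
  set A' : Subalgebra k B := Subalgebra.centralizer k (Set.range ⇑ιA) with hA'
  -- commutation property of maps into the centralizer
  have hcomm : ∀ (ψ : H →ₗ[k] A') (h : H) (a : A),
      ιA a * (A'.val.toLinearMap ∘ₗ ψ) h = (A'.val.toLinearMap ∘ₗ ψ) h * ιA a := by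
    intro ψ h a
    exact (Subalgebra.mem_centralizer_iff (R := k)).mp (ψ h).2 (ιA a) ⟨a, rfl⟩
  -- the forward linear map
  have memT : ∀ ψ : H →ₗ[k] A',
      inducedEnd k H A B ιA ιH e (A'.val.toLinearMap ∘ₗ ψ) ∈ bimodEnd k A B ιA := by
    intro ψ a x
    exact ⟨phi_left hs _ a x, phi_right hs _ (fun h a => hcomm ψ h a) a x⟩
  let T : (H →ₗ[k] A') →ₗ[k] (bimodEnd k A B ιA) :=
    { toFun := fun ψ => ⟨inducedEnd k H A B ιA ιH e (A'.val.toLinearMap ∘ₗ ψ), memT ψ⟩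
      map_add' := fun ψ φ => Subtype.ext (by
        simp only [LinearMap.comp_add, inducedEnd_add]
        rfl)
      map_smul' := fun c ψ => Subtype.ext (by
        simp only [LinearMap.comp_smul, inducedEnd_smul, RingHom.id_apply]
        rfl) }
  -- the backward construction
  let χ : (bimodEnd k A B ιA) → (H →ₗ[k] B) := fun f =>
    conv k (ιH.toLinearMap ∘ₗ HopfAlgebra.antipode (R := k)) ((f : B →ₗ[k] B) ∘ₗ ιH.toLinearMap)
  have hχ4 : ∀ f : bimodEnd k A B ιA,
      inducedEnd k H A B ιA ιH e (χ f) = (f : B →ₗ[k] B) := fun f =>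
    claim4 hs (f : B →ₗ[k] B) (fun a x => (f.2 a x).1)
  have memS : ∀ (f : bimodEnd k A B ιA) (h : H), χ f h ∈ A' := by
    intro f h
    have hbm : ∀ (a : A) (x : B),
        inducedEnd k H A B ιA ιH e (χ f) (ιA a * x)
          = ιA a * inducedEnd k H A B ιA ιH e (χ f) x ∧
        inducedEnd k H A B ιA ιH e (χ f) (x * ιA a)
          = inducedEnd k H A B ιA ιH e (χ f) x * ιA a := by
      intro a x
      rw [hχ4 f]
      exact f.2 a x
    have hc := mem_centralizer_of_bimod hs (χ f) hbm
    exact (Subalgebra.mem_centralizer_iff (R := k)).mpr (by rintro g ⟨a, rfl⟩; exact hc h a)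
  let S : (bimodEnd k A B ιA) →ₗ[k] (H →ₗ[k] A') :=
    { toFun := fun f =>
        { toFun := fun h => ⟨χ f h, memS f h⟩
          map_add' := fun x y => Subtype.ext (map_add (χ f) x y)
          map_smul' := fun c x => Subtype.ext (map_smul (χ f) c x) }
      map_add' := fun f g => LinearMap.ext fun h => Subtype.ext (by
        show χ (f + g) h = χ f h + χ g h
        have : χ (f + g) = χ f + χ g := by
          show conv k _ (((f : B →ₗ[k] B) + (g : B →ₗ[k] B)) ∘ₗ ιH.toLinearMap) = _
          rw [LinearMap.add_comp, conv_add_right]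
        rw [this]; rfl)
      map_smul' := fun c f => LinearMap.ext fun h => Subtype.ext (by
        show χ (c • f) h = (c • χ f) h
        have : χ (c • f) = c • χ f := by
          show conv k _ ((c • (f : B →ₗ[k] B)) ∘ₗ ιH.toLinearMap) = _
          rw [LinearMap.smul_comp, conv_smul_right]
        rw [this]) }
  have hTS : T ∘ₗ S = LinearMap.id := by
    refine LinearMap.ext fun f => Subtype.ext ?_
    show inducedEnd k H A B ιA ιH e (A'.val.toLinearMap ∘ₗ (S f : H →ₗ[k] A')) = (f : B →ₗ[k] B)
    have : A'.val.toLinearMap ∘ₗ (S f : H →ₗ[k] A') = χ f := by ext h; rfl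
    rw [this, hχ4 f]
  have hST : S ∘ₗ T = LinearMap.id := by
    refine LinearMap.ext fun ψ => LinearMap.ext fun h => Subtype.ext ?_
    show χ (T ψ) h = (ψ h : B)
    have : χ (T ψ) = A'.val.toLinearMap ∘ₗ ψ := by
      show conv k (ιH.toLinearMap ∘ₗ HopfAlgebra.antipode (R := k))
        ((inducedEnd k H A B ιA ιH e (A'.val.toLinearMap ∘ₗ ψ)) ∘ₗ ιH.toLinearMap) = _
      exact claim3 hs _
    rw [this]; rfl
  exact ⟨LinearEquiv.ofLinear T S hTS hST, fun ψ => rfl⟩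

end
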